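/- arXiv:1007.1366 — 2 statements merged into one kernel-verified Lean document; each statement's English description precedes it below -/
import Mathlib

section
/- For each n ≥ 2 let U^{(n)} be Haar distributed on the unitary group U(n) and set T^{(n)}_{p,q} = Σ_{i≤p, j≤q} |U^{(n)}_{ij}|². Then max_{0≤p,q≤n} |(1/n) T^{(n)}_{p,q} − pq/n²| converges to 0 in probability as n → ∞, i.e. for every ε > 0 the Haar probability that this maximum exceeds ε tends to 0. -/
/-!
Write `R_i = ∑_{j<q} |U_{ij}|²`, so that `T_{p,q} = ∑_{i<p} R_i`, every `R_i` lies in `[0, 1]`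
and `∑_i R_i = q`. Left multiplication by a permutation matrix preserves Haar measure and permutes
the rows of `U`, so `𝔼 R_i = q / n` and, for fixed `i`, the covariance of `R_i` and `R_j` does not
depend on `j ≠ i`. As `∑_i R_i` is constant these covariances are nonpositive, whence
`Var T_{p,q} ≤ ∑_{i<p} Var R_i ≤ n / 4`, and Chebyshev bounds the probability that
`|T_{p,q} / n - pq / n²| > ε / 2` by `1 / (n ε²)` for each fixed `(p, q)`. Since `T_{p,q}` is
1-Lipschitz in each of `p` and `q`, a union bound over a grid of `(m + 1)²` points of spacing about
`n / m`, with `m ≥ 8 / ε`, controls all `(p, q)` at once.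
-/

open MeasureTheory Matrix Filter

/-- The entrywise (Borel) measurable structure on matrices. -/
instance matrixMeasurableSpace {m n α : Type*} [MeasurableSpace α] :
    MeasurableSpace (Matrix m n α) :=
  inferInstanceAs (MeasurableSpace (m → n → α))

/-- `T_{p,q} = Σ_{1 ≤ i ≤ p, 1 ≤ j ≤ q} |U_{ij}|²` (equal to `0` if `p = 0` or `q = 0`). -/
noncomputable def truncTraceU (n p q : ℕ) (U : Matrix.unitaryGroup (Fin n) ℂ) : ℝ :=
  ∑ i : Fin n, ∑ j : Fin n,
    if (i : ℕ) < p ∧ (j : ℕ) < q then ‖(U : Matrix (Fin n) (Fin n) ℂ) i j‖ ^ 2 else 0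

open ProbabilityTheory Finset

namespace ProbabilityTheory

section NegativeCorrelation

variable {Ω ι : Type*} [MeasurableSpace Ω] {μ : Measure Ω} {X : ι → Ω → ℝ}

lemma variance_sum_le_of_covariance_nonpos [IsFiniteMeasure μ] {s : Finset ι}
    (hX : ∀ i ∈ s, MemLp (X i) 2 μ) (hcov : ∀ i ∈ s, ∀ j ∈ s, i ≠ j → cov[X i, X j; μ] ≤ 0) :
    Var[fun ω ↦ ∑ i ∈ s, X i ω; μ] ≤ ∑ i ∈ s, Var[X i; μ] := by
  classical
  rw [variance_fun_sum' hX]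
  refine sum_le_sum fun i hi ↦ ?_
  rw [← add_sum_erase s _ hi, covariance_self (hX i hi).aemeasurable]
  exact add_le_of_nonpos_right <| sum_nonpos fun j hj ↦
    hcov i hi j (mem_of_mem_erase hj) (ne_of_mem_erase hj).symm

/-- `0 = cov[X i, ∑ k, X k] = Var[X i] + (card ι - 1) * cov[X i, X j]`. -/
lemma covariance_nonpos_of_sum_eq_const [IsProbabilityMeasure μ] [Fintype ι]
    (hX : ∀ i, MemLp (X i) 2 μ) {c : ℝ} (hsum : ∀ ω, ∑ i, X i ω = c) {i j : ι}
    (hcov : ∀ k, k ≠ i → cov[X i, X k; μ] = cov[X i, X j; μ]) (hij : i ≠ j) :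
    cov[X i, X j; μ] ≤ 0 := by
  classical
  have hzero : ∑ k, cov[X i, X k; μ] = 0 := by
    rw [← covariance_fun_sum_right hX (hX i), funext hsum, covariance_const_right]
  rw [← add_sum_erase _ _ (mem_univ i), covariance_self (hX i).aemeasurable,
    sum_congr rfl fun k hk ↦ hcov k (ne_of_mem_erase hk), sum_const,
    card_erase_of_mem (mem_univ i), nsmul_eq_mul] at hzero
  have : Nontrivial ι := nontrivial_of_ne i j hij
  have hcard : (1 : ℝ) ≤ ((univ : Finset ι).card - 1 : ℕ) := by
    have := Fintype.one_lt_card (α := ι)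
    exact_mod_cast (by rw [card_univ]; omega)
  nlinarith [variance_nonneg (X i) μ]

end NegativeCorrelation

section Group

variable {G : Type*} [Group G] [MeasurableSpace G] [MeasurableMul G] {μ : Measure G}
  [μ.IsMulLeftInvariant]

lemma covariance_comp_mul_left (X Y : G → ℝ) (g : G) :
    cov[fun x ↦ X (g * x), fun x ↦ Y (g * x); μ] = cov[X, Y; μ] := by
  simp only [covariance, integral_mul_left_eq_self (μ := μ) X g,
    integral_mul_left_eq_self (μ := μ) Y g]
  exact integral_mul_left_eq_self (μ := μ) (fun x ↦ (X x - μ[X]) * (Y x - μ[Y])) g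

end Group

end ProbabilityTheory

-- Through continuity of multiplication, this makes `unitaryGroup (Fin n) ℂ` a `MeasurableMul`.
instance Matrix.borelSpace {m n α : Type*} [Fintype m] [Fintype n] [TopologicalSpace α]
    [MeasurableSpace α] [SecondCountableTopology α] [BorelSpace α] : BorelSpace (Matrix m n α) :=
  inferInstanceAs (BorelSpace (m → n → α))

lemma Equiv.Perm.permMatrix_mem_unitaryGroup {ι R : Type*} [Fintype ι] [DecidableEq ι]
    [CommRing R] [StarRing R] (σ : Equiv.Perm ι) : σ.permMatrix R ∈ unitaryGroup ι R := by
  rw [mem_unitaryGroup_iff]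
  change σ.permMatrix R * (σ.permMatrix R)ᴴ = 1
  rw [conjTranspose_permMatrix, ← permMatrix_mul, inv_mul_cancel, permMatrix_one]

lemma Matrix.sum_norm_sq_row_of_mem_unitaryGroup {ι 𝕜 : Type*} [Fintype ι] [DecidableEq ι]
    [RCLike 𝕜] {U : Matrix ι ι 𝕜} (hU : U ∈ unitaryGroup ι 𝕜) (i : ι) :
    ∑ j, ‖U i j‖ ^ 2 = 1 := by
  have h : (U * star U) i i = 1 := by rw [mem_unitaryGroup_iff.mp hU, one_apply_eq]
  simp only [mul_apply, star_apply, ← starRingEnd_apply, RCLike.mul_conj] at h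
  exact_mod_cast h

lemma Matrix.sum_norm_sq_col_of_mem_unitaryGroup {ι 𝕜 : Type*} [Fintype ι] [DecidableEq ι]
    [RCLike 𝕜] {U : Matrix ι ι 𝕜} (hU : U ∈ unitaryGroup ι 𝕜) (j : ι) :
    ∑ i, ‖U i j‖ ^ 2 = 1 := by
  simpa using sum_norm_sq_row_of_mem_unitaryGroup (Unitary.star_mem hU) j

section TruncatedTrace

variable {n : ℕ}

noncomputable def truncRowNormSq (q : ℕ) (i : Fin n) (U : unitaryGroup (Fin n) ℂ) : ℝ :=
  ∑ j : Fin n with j.val < q, ‖(U : Matrix (Fin n) (Fin n) ℂ) i j‖ ^ 2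

lemma truncRowNormSq_nonneg (q : ℕ) (i : Fin n) (U : unitaryGroup (Fin n) ℂ) :
    0 ≤ truncRowNormSq q i U :=
  sum_nonneg fun _ _ ↦ sq_nonneg _

lemma truncRowNormSq_le_one (q : ℕ) (i : Fin n) (U : unitaryGroup (Fin n) ℂ) :
    truncRowNormSq q i U ≤ 1 := by
  rw [truncRowNormSq, ← sum_norm_sq_row_of_mem_unitaryGroup U.2 i]
  exact sum_le_sum_of_subset_of_nonneg (filter_subset _ _) fun _ _ _ ↦ sq_nonneg _

lemma sum_truncRowNormSq (q : ℕ) (U : unitaryGroup (Fin n) ℂ) :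
    ∑ i, truncRowNormSq q i U = min n q := by
  simp only [truncRowNormSq]
  rw [sum_comm]
  simp [sum_norm_sq_col_of_mem_unitaryGroup U.2, Fin.card_filter_val_lt]

noncomputable def permUnitary (σ : Equiv.Perm (Fin n)) : unitaryGroup (Fin n) ℂ :=
  ⟨σ.permMatrix ℂ, σ.permMatrix_mem_unitaryGroup⟩

lemma truncRowNormSq_permUnitary_mul (q : ℕ) (σ : Equiv.Perm (Fin n)) (i : Fin n)
    (U : unitaryGroup (Fin n) ℂ) :
    truncRowNormSq q i (permUnitary σ * U) = truncRowNormSq q (σ i) U := by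
  simp [truncRowNormSq, permUnitary, PEquiv.toMatrix_toPEquiv_mul]

lemma truncTraceU_eq_sum_truncRowNormSq (p q : ℕ) (U : unitaryGroup (Fin n) ℂ) :
    truncTraceU n p q U = ∑ i : Fin n with i.val < p, truncRowNormSq q i U := by
  simp only [truncTraceU, truncRowNormSq, sum_filter, ite_and]
  refine sum_congr rfl fun i _ ↦ ?_
  split_ifs <;> simp

lemma truncTraceU_star (p q : ℕ) (U : unitaryGroup (Fin n) ℂ) :
    truncTraceU n p q U = truncTraceU n q p (star U) := by
  simp only [truncTraceU]
  rw [sum_comm]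
  simp [and_comm]

lemma measurable_truncRowNormSq (q : ℕ) (i : Fin n) : Measurable (truncRowNormSq q i) := by
  unfold truncRowNormSq
  exact Finset.measurable_sum _ fun j _ ↦
    (continuous_subtype_val.matrix_elem i j).measurable.norm.pow_const 2

lemma Fin.card_filter_val_Ico_le (n a p : ℕ) : #{i : Fin n | a ≤ i.val ∧ i.val < p} ≤ p - a := by
  simpa using card_le_card_of_injOn Fin.val (t := Ico a p)
    (fun i hi ↦ by simpa using (mem_filter.mp hi).2) Fin.val_injective.injOn

lemma abs_truncTraceU_sub_le_left (p a q : ℕ) (U : unitaryGroup (Fin n) ℂ) :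
    |truncTraceU n p q U - truncTraceU n a q U| ≤ |(p : ℝ) - a| := by
  wlog hap : a ≤ p generalizing p a
  · rw [abs_sub_comm, abs_sub_comm (p : ℝ)]
    exact this a p (by omega)
  have hdiff : truncTraceU n p q U - truncTraceU n a q U
      = ∑ i : Fin n with a ≤ i.val ∧ i.val < p, truncRowNormSq q i U := by
    simp only [truncTraceU_eq_sum_truncRowNormSq, sum_filter, ← sum_sub_distrib]
    refine sum_congr rfl fun i _ ↦ ?_
    split_ifs <;> first | (exfalso; omega) | ring
  rw [hdiff, abs_of_nonneg (sum_nonneg fun i _ ↦ truncRowNormSq_nonneg q i U),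
    abs_of_nonneg (sub_nonneg.mpr (by exact_mod_cast hap))]
  calc ∑ i : Fin n with a ≤ i.val ∧ i.val < p, truncRowNormSq q i U
      ≤ #{i : Fin n | a ≤ i.val ∧ i.val < p} := by
        simpa using sum_le_sum fun i (_ : i ∈ _) ↦ truncRowNormSq_le_one q i U
    _ ≤ ((p - a : ℕ) : ℝ) := by exact_mod_cast Fin.card_filter_val_Ico_le n a p
    _ = p - a := Nat.cast_sub hap

lemma abs_truncTraceU_sub_le (p q a b : ℕ) (U : unitaryGroup (Fin n) ℂ) :
    |truncTraceU n p q U - truncTraceU n a b U| ≤ |(p : ℝ) - a| + |(q : ℝ) - b| := by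
  calc |truncTraceU n p q U - truncTraceU n a b U|
      ≤ |truncTraceU n p q U - truncTraceU n a q U| + |truncTraceU n a q U - truncTraceU n a b U| :=
        abs_sub_le _ _ _
    _ ≤ |(p : ℝ) - a| + |(q : ℝ) - b| := by
        refine add_le_add (abs_truncTraceU_sub_le_left p a q U) ?_
        rw [truncTraceU_star a q, truncTraceU_star a b]
        exact abs_truncTraceU_sub_le_left q b a (star U)

noncomputable def truncTraceDeviation (n p q : ℕ) (U : unitaryGroup (Fin n) ℂ) : ℝ :=
  (1 / (n : ℝ)) * truncTraceU n p q U - (p : ℝ) * q / (n : ℝ) ^ 2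

lemma abs_truncTraceDeviation_sub_le {p q a b : ℕ} (hp : p ≤ n) (hb : b ≤ n)
    (U : unitaryGroup (Fin n) ℂ) :
    |truncTraceDeviation n p q U - truncTraceDeviation n a b U|
      ≤ 2 * (|(p : ℝ) - a| + |(q : ℝ) - b|) / n := by
  rcases Nat.eq_zero_or_pos n with rfl | hn
  · simp [truncTraceDeviation]
  set L := |(p : ℝ) - a| + |(q : ℝ) - b|
  have hnR : (0 : ℝ) < n := by exact_mod_cast hn
  have hprod : |(p : ℝ) * q - a * b| ≤ n * L := by
    have hpn : (p : ℝ) ≤ n := by exact_mod_cast hp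
    have hbn : (b : ℝ) ≤ n := by exact_mod_cast hb
    calc |(p : ℝ) * q - a * b| = |(p : ℝ) * (q - b) + b * (p - a)| := by ring_nf
      _ ≤ p * |(q : ℝ) - b| + b * |(p : ℝ) - a| := by
        refine (abs_add_le _ _).trans ?_
        rw [abs_mul, abs_mul, Nat.abs_cast, Nat.abs_cast]
      _ ≤ n * L := by
        simp only [L]
        nlinarith [abs_nonneg ((p : ℝ) - a), abs_nonneg ((q : ℝ) - b)]
  have hsplit : truncTraceDeviation n p q U - truncTraceDeviation n a b U
      = (truncTraceU n p q U - truncTraceU n a b U) / n - ((p : ℝ) * q - a * b) / n ^ 2 := by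
    simp only [truncTraceDeviation]
    ring
  rw [hsplit]
  calc _ ≤ |truncTraceU n p q U - truncTraceU n a b U| / n + |(p : ℝ) * q - a * b| / n ^ 2 := by
        refine (abs_sub _ _).trans_eq ?_
        rw [abs_div, abs_div, abs_of_pos hnR, abs_of_pos (pow_pos hnR 2)]
    _ ≤ L / n + n * L / n ^ 2 := by
        gcongr
        exact abs_truncTraceU_sub_le p q a b U
    _ = 2 * L / n := by
        field_simp
        ring

def gridPoints (n m : ℕ) : Finset ℕ :=
  (range (m + 1)).image fun k ↦ min (k * (n / m + 1)) n

lemma card_gridPoints_le (n m : ℕ) : #(gridPoints n m) ≤ m + 1 :=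
  card_image_le.trans (card_range _).le

lemma le_of_mem_gridPoints {m a : ℕ} (ha : a ∈ gridPoints n m) : a ≤ n := by
  obtain ⟨k, -, rfl⟩ := mem_image.mp ha
  exact min_le_right _ _

lemma exists_mem_gridPoints_near {m p : ℕ} (hm : 0 < m) (hp : p ≤ n) :
    ∃ a ∈ gridPoints n m, a ≤ p ∧ p ≤ a + n / m := by
  set s := n / m + 1
  have hs : 0 < s := Nat.succ_pos _
  have hlow : p / s * s ≤ p := Nat.div_mul_le_self p s
  have hhigh : p < p / s * s + s := Nat.lt_div_mul_add hs
  have hk : p / s < m + 1 := by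
    rw [Nat.div_lt_iff_lt_mul hs]
    have := Nat.lt_div_mul_add (a := n) hm
    have : (m + 1) * s = n / m * m + m + s := by ring
    omega
  exact ⟨p / s * s, mem_image.mpr ⟨p / s, mem_range.mpr hk, min_eq_left (hlow.trans hp)⟩, hlow,
    by omega⟩

lemma setOf_exists_truncTraceDeviation_gt_subset {m : ℕ} {ε : ℝ} (hm : 0 < m) (hεm : 8 ≤ ε * m) :
    {U : unitaryGroup (Fin n) ℂ | ∃ p ≤ n, ∃ q ≤ n, ε < |truncTraceDeviation n p q U|}
      ⊆ ⋃ a ∈ gridPoints n m, ⋃ b ∈ gridPoints n m,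
          {U | ε / 2 < |truncTraceDeviation n a b U|} := by
  rintro U ⟨p, hp, q, hq, hU⟩
  obtain ⟨a, ha, hap, hpa⟩ := exists_mem_gridPoints_near hm hp
  obtain ⟨b, hb, hbq, hqb⟩ := exists_mem_gridPoints_near hm hq
  have hmR : (0 : ℝ) < m := by exact_mod_cast hm
  have hε : 0 < ε := pos_of_mul_pos_left (by linarith) hmR.le
  have hnear {x y : ℕ} (hyx : y ≤ x) (hxy : x ≤ y + n / m) : |(x : ℝ) - y| ≤ n / m := by
    have hxy' : (x : ℝ) ≤ y + (n / m : ℕ) := by exact_mod_cast hxy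
    rw [abs_of_nonneg (sub_nonneg.mpr (by exact_mod_cast hyx))]
    linarith [Nat.cast_div_le (m := n) (n := m) (α := ℝ)]
  have hclose : |truncTraceDeviation n p q U - truncTraceDeviation n a b U| ≤ ε / 2 := by
    refine (abs_truncTraceDeviation_sub_le hp (le_of_mem_gridPoints hb) U).trans ?_
    rcases Nat.eq_zero_or_pos n with rfl | hn
    · rw [Nat.cast_zero, div_zero]
      positivity
    calc 2 * (|(p : ℝ) - a| + |(q : ℝ) - b|) / n ≤ 2 * (n / m + n / m) / n := by
          gcongr
          exacts [hnear hap hpa, hnear hbq hqb]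
      _ = 4 / m := by field_simp; ring
      _ ≤ ε / 2 := by rw [div_le_iff₀ hmR]; linarith
  simp only [Set.mem_iUnion]
  refine ⟨a, ha, b, hb, ?_⟩
  have := abs_sub_abs_le_abs_sub (truncTraceDeviation n p q U) (truncTraceDeviation n a b U)
  show ε / 2 < |truncTraceDeviation n a b U|
  linarith

section Haar

variable (μ : Measure (unitaryGroup (Fin n) ℂ)) [IsProbabilityMeasure μ]

lemma memLp_truncRowNormSq (q : ℕ) (i : Fin n) : MemLp (truncRowNormSq q i) 2 μ :=
  memLp_of_bounded (ae_of_all _ fun U ↦ ⟨truncRowNormSq_nonneg q i U, truncRowNormSq_le_one q i U⟩)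
    (measurable_truncRowNormSq q i).aestronglyMeasurable 2

lemma memLp_truncTraceU (p q : ℕ) : MemLp (truncTraceU n p q) 2 μ := by
  rw [funext (truncTraceU_eq_sum_truncRowNormSq p q)]
  exact memLp_finsetSum _ fun i _ ↦ memLp_truncRowNormSq μ q i

variable [μ.IsMulLeftInvariant]

lemma integral_truncRowNormSq (q : ℕ) (i : Fin n) :
    ∫ U, truncRowNormSq q i U ∂μ = min n q / n := by
  have hperm (k : Fin n) : ∫ U, truncRowNormSq q k U ∂μ = ∫ U, truncRowNormSq q i U ∂μ := by
    simpa [truncRowNormSq_permUnitary_mul] using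
      integral_mul_left_eq_self (μ := μ) (truncRowNormSq q i) (permUnitary (Equiv.swap k i))
  have hsum : ∑ k, ∫ U, truncRowNormSq q k U ∂μ = min n q := by
    rw [← integral_finsetSum _ fun k _ ↦ (memLp_truncRowNormSq μ q k).integrable one_le_two]
    simp [sum_truncRowNormSq]
  simp only [hperm, sum_const, card_univ, Fintype.card_fin, nsmul_eq_mul] at hsum
  have hn : (0 : ℝ) < n := by exact_mod_cast i.pos
  rw [← hsum]
  field_simp

lemma integral_truncTraceU {p q : ℕ} (hp : p ≤ n) (hq : q ≤ n) :
    ∫ U, truncTraceU n p q U ∂μ = p * q / n := by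
  simp only [truncTraceU_eq_sum_truncRowNormSq]
  rw [integral_finsetSum _ fun i _ ↦ (memLp_truncRowNormSq μ q i).integrable one_le_two]
  simp [integral_truncRowNormSq, Fin.card_filter_val_lt, hp, hq, mul_div_assoc]

lemma covariance_truncRowNormSq_nonpos (q : ℕ) {i j : Fin n} (hij : i ≠ j) :
    cov[truncRowNormSq q i, truncRowNormSq q j; μ] ≤ 0 := by
  refine covariance_nonpos_of_sum_eq_const (memLp_truncRowNormSq μ q) (sum_truncRowNormSq q)
    (fun k hki ↦ ?_) hij
  have := covariance_comp_mul_left (μ := μ) (truncRowNormSq q i) (truncRowNormSq q j)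
    (permUnitary (Equiv.swap k j))
  simpa [truncRowNormSq_permUnitary_mul, Equiv.swap_apply_of_ne_of_ne hki.symm hij] using this

lemma variance_truncTraceU_le (p q : ℕ) : Var[truncTraceU n p q; μ] ≤ n / 4 := by
  rw [funext (truncTraceU_eq_sum_truncRowNormSq p q)]
  calc Var[fun U ↦ ∑ i : Fin n with i.val < p, truncRowNormSq q i U; μ]
      ≤ ∑ i : Fin n with i.val < p, Var[truncRowNormSq q i; μ] :=
        variance_sum_le_of_covariance_nonpos (fun i _ ↦ memLp_truncRowNormSq μ q i)
          fun i _ j _ hij ↦ covariance_truncRowNormSq_nonpos μ q hij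
    _ ≤ ∑ i : Fin n with i.val < p, ((1 - 0) / 2) ^ 2 := by
        refine sum_le_sum fun i _ ↦ variance_le_sq_of_bounded (ae_of_all _ fun U ↦
          ⟨truncRowNormSq_nonneg q i U, truncRowNormSq_le_one q i U⟩)
          (measurable_truncRowNormSq q i).aemeasurable
    _ ≤ n / 4 := by
        rw [sum_const, Fin.card_filter_val_lt, nsmul_eq_mul]
        have : ((min n p : ℕ) : ℝ) ≤ n := by exact_mod_cast min_le_left n p
        linarith

lemma measure_truncTraceDeviation_gt_le (hn : 0 < n) {p q : ℕ} (hp : p ≤ n) (hq : q ≤ n) {c : ℝ}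
    (hc : 0 < c) :
    μ {U | c < |truncTraceDeviation n p q U|} ≤ ENNReal.ofReal (1 / (4 * n * c ^ 2)) := by
  have hnR : (0 : ℝ) < n := by exact_mod_cast hn
  have hsub : {U | c < |truncTraceDeviation n p q U|}
      ⊆ {U | n * c ≤ |truncTraceU n p q U - ∫ V, truncTraceU n p q V ∂μ|} := by
    intro U hU
    have hdev : truncTraceDeviation n p q U = (truncTraceU n p q U - p * q / n) / n := by
      simp only [truncTraceDeviation]
      field_simp
    simp only [Set.mem_ofPred_eq, hdev, abs_div, Nat.abs_cast, lt_div_iff₀ hnR] at hU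
    simp only [Set.mem_ofPred_eq, integral_truncTraceU μ hp hq]
    linarith
  calc μ {U | c < |truncTraceDeviation n p q U|}
      ≤ ENNReal.ofReal (Var[truncTraceU n p q; μ] / (n * c) ^ 2) :=
        (measure_mono hsub).trans <|
          meas_ge_le_variance_div_sq (memLp_truncTraceU μ p q) (by positivity)
    _ ≤ ENNReal.ofReal (1 / (4 * n * c ^ 2)) := by
        refine ENNReal.ofReal_le_ofReal ?_
        calc Var[truncTraceU n p q; μ] / (n * c) ^ 2 ≤ n / 4 / (n * c) ^ 2 := by
              gcongr
              exact variance_truncTraceU_le μ p q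
          _ = 1 / (4 * n * c ^ 2) := by field_simp

lemma measure_exists_truncTraceDeviation_gt_le (hn : 0 < n) {m : ℕ} (hm : 0 < m) {ε : ℝ}
    (hεm : 8 ≤ ε * m) :
    μ {U | ∃ p ≤ n, ∃ q ≤ n, ε < |truncTraceDeviation n p q U|}
      ≤ ENNReal.ofReal ((m + 1) ^ 2 / ε ^ 2 / n) := by
  set G := gridPoints n m
  have hε : 0 < ε := pos_of_mul_pos_left (by linarith) (Nat.cast_nonneg m)
  have hcheb : ∀ a ∈ G, ∀ b ∈ G, μ {U | ε / 2 < |truncTraceDeviation n a b U|}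
      ≤ ENNReal.ofReal (1 / (ε ^ 2 * n)) := fun a ha b hb ↦ by
    convert measure_truncTraceDeviation_gt_le μ hn (le_of_mem_gridPoints ha)
      (le_of_mem_gridPoints hb) (half_pos hε) using 3
    ring
  have hG : (#G : ℝ) ≤ m + 1 := by exact_mod_cast card_gridPoints_le n m
  calc μ {U | ∃ p ≤ n, ∃ q ≤ n, ε < |truncTraceDeviation n p q U|}
      ≤ ∑ a ∈ G, ∑ b ∈ G, μ {U | ε / 2 < |truncTraceDeviation n a b U|} :=
        (measure_mono (setOf_exists_truncTraceDeviation_gt_subset hm hεm)).trans <|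
          (measure_biUnion_finset_le _ _).trans (sum_le_sum fun _ _ ↦ measure_biUnion_finset_le _ _)
    _ ≤ ∑ a ∈ G, ∑ b ∈ G, ENNReal.ofReal (1 / (ε ^ 2 * n)) :=
        sum_le_sum fun a ha ↦ sum_le_sum fun b hb ↦ hcheb a ha b hb
    _ = ENNReal.ofReal (#G * #G * (1 / (ε ^ 2 * n))) := by
        rw [sum_const, sum_const, ← ENNReal.ofReal_nsmul, ← ENNReal.ofReal_nsmul, nsmul_eq_mul,
          nsmul_eq_mul, mul_assoc]
    _ ≤ ENNReal.ofReal ((m + 1) ^ 2 / ε ^ 2 / n) := by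
        refine ENNReal.ofReal_le_ofReal ?_
        calc (#G : ℝ) * #G * (1 / (ε ^ 2 * n)) ≤ (m + 1) * (m + 1) * (1 / (ε ^ 2 * n)) := by
              gcongr
          _ = (m + 1) ^ 2 / ε ^ 2 / n := by field_simp

end Haar

end TruncatedTrace

/-- If `U⁽ⁿ⁾` is Haar distributed on `U(n)`, then
`max_{0 ≤ p, q ≤ n} |(1/n) T_{p,q} - pq/n²| → 0` in probability: for every `ε > 0`, the Haar
probability that some `p, q ≤ n` satisfy `|(1/n) T_{p,q} - pq/n²| > ε` tends to `0`. -/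
theorem truncTraceU_uniform_law_of_large_numbers
    (μ : ∀ n : ℕ, Measure (Matrix.unitaryGroup (Fin n) ℂ))
    (hHaar : ∀ n, (μ n).IsHaarMeasure) (hProb : ∀ n, IsProbabilityMeasure (μ n)) :
    ∀ ε : ℝ, 0 < ε →
      Tendsto (fun n : ℕ =>
          μ n {U | ∃ p ≤ n, ∃ q ≤ n,
            ε < |(1 / (n : ℝ)) * truncTraceU n p q U - (p : ℝ) * q / (n : ℝ) ^ 2|})
        atTop (nhds 0) := by
  intro ε hε
  obtain ⟨m, hm⟩ := exists_nat_ge (8 / ε)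
  have hεm : 8 ≤ ε * m := by rwa [div_le_iff₀' hε] at hm
  have hm0 : 0 < m := Nat.cast_pos.mp ((div_pos (by norm_num) hε).trans_le hm)
  have hbound : Tendsto (fun n : ℕ ↦ ENNReal.ofReal ((m + 1) ^ 2 / ε ^ 2 / n)) atTop (nhds 0) := by
    simpa using ENNReal.tendsto_ofReal (tendsto_const_div_atTop_nhds_zero_nat _)
  refine tendsto_of_tendsto_of_tendsto_of_le_of_le' tendsto_const_nhds hbound
    (Eventually.of_forall fun _ ↦ zero_le) ?_
  filter_upwards [eventually_gt_atTop 0] with n hn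
  have := hHaar n
  have := hProb n
  exact measure_exists_truncTraceDeviation_gt_le (μ n) hn hm0 hεm
end

section
/- Let S be a finite set of cardinality k and let A and B be partitions of S. Suppose there exist a block A_i of A and a block B_j of B such that the intersection A_i ∩ B_j has cardinality l. Then #(A) + #(B) ≤ k − l + 1 + #(A∨B), where #(·) denotes the number of blocks of a partition and A∨B is the join in the lattice of partitions of S. -/
/-!
For a partition `r` of a finite set, the functions constant on the blocks of `r` form a
subspace `W r` of dimension `#(r)`. A function is constant on the blocks of `A ⊔ B` iff it is
constant on those of `A` and of `B`, so `W (A ⊔ B) = W A ⊓ W B`, while `W A ⊔ W B ≤ W (A ⊓ B)`.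
Grassmann's formula `dim (U ⊔ V) + dim (U ⊓ V) = dim U + dim V` then gives
`#(A) + #(B) ≤ #(A ⊓ B) + #(A ⊔ B)`. Finally `A_i ∩ B_j` lies in a single block of `A ⊓ B`,
so this partition has at most `k - l + 1` blocks.
-/

namespace Setoid

variable {α : Type*}

section ClassConst

variable (K : Type*) [Field K]

def classConst (r : Setoid α) : Submodule K (α → K) where
  carrier := {g | r ≤ ker g}
  add_mem' {g h} hg hh x y hxy := by
    simp only [ker_def, Pi.add_apply] at *
    rw [hg hxy, hh hxy]
  zero_mem' _ _ _ := rfl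
  smul_mem' c g hg x y hxy := by
    simp only [ker_def, Pi.smul_apply] at *
    rw [hg hxy]

variable {K}

theorem classConst_anti {r s : Setoid α} (h : r ≤ s) : classConst K s ≤ classConst K r :=
  fun _ hg => h.trans hg

theorem classConst_sup (r s : Setoid α) :
    classConst K (r ⊔ s) = classConst K r ⊓ classConst K s := by
  ext g
  exact (sup_le_iff : r ⊔ s ≤ ker g ↔ _)

theorem classConst_eq_range_funLeft (r : Setoid α) :
    classConst K r = LinearMap.range (LinearMap.funLeft K K (Quotient.mk r)) := by
  ext g
  refine ⟨fun hg => ⟨Quotient.lift g fun _ _ h => hg h, rfl⟩, ?_⟩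
  rintro ⟨f, rfl⟩ x y hxy
  exact congrArg f (Quotient.sound hxy)

theorem finrank_classConst [Finite α] (r : Setoid α) :
    Module.finrank K (classConst K r) = Nat.card (Quotient r) := by
  have := Fintype.ofFinite (Quotient r)
  rw [classConst_eq_range_funLeft, LinearMap.finrank_range_of_inj
    (LinearMap.funLeft_injective_of_surjective _ _ _ Quotient.mk_surjective),
    Module.finrank_fintype_fun_eq_card, Nat.card_eq_fintype_card]

end ClassConst

theorem card_quotient_add_card_quotient_le [Finite α] (r s : Setoid α) :
    Nat.card (Quotient r) + Nat.card (Quotient s) ≤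
      Nat.card (Quotient (r ⊓ s)) + Nat.card (Quotient (r ⊔ s)) := by
  let W := classConst ℚ (α := α)
  calc Nat.card (Quotient r) + Nat.card (Quotient s)
      = Module.finrank ℚ (W r) + Module.finrank ℚ (W s) := by
        rw [finrank_classConst, finrank_classConst]
    _ = Module.finrank ℚ ↥(W r ⊔ W s) + Module.finrank ℚ ↥(W r ⊓ W s) :=
        (Submodule.finrank_sup_add_finrank_inf_eq _ _).symm
    _ ≤ Module.finrank ℚ (W (r ⊓ s)) + Module.finrank ℚ (W (r ⊔ s)) := by
        rw [show W (r ⊔ s) = W r ⊓ W s from classConst_sup r s]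
        gcongr
        exact Submodule.finrank_mono
          (sup_le (classConst_anti inf_le_left) (classConst_anti inf_le_right))
    _ = Nat.card (Quotient (r ⊓ s)) + Nat.card (Quotient (r ⊔ s)) := by
        rw [finrank_classConst, finrank_classConst]

theorem card_quotient_add_ncard_le [Finite α] (r : Setoid α) {T : Set α}
    (hT : ∀ x ∈ T, ∀ y ∈ T, r x y) : Nat.card (Quotient r) + T.ncard ≤ Nat.card α + 1 := by
  rcases T.eq_empty_or_nonempty with rfl | ⟨c, hc⟩
  · rw [Set.ncard_empty, add_zero]
    exact (Nat.card_le_card_of_surjective _ Quotient.mk_surjective).trans (Nat.le_succ _)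
  have hcover : Quotient.mk r '' (Tᶜ ∪ {c}) = Set.univ := by
    refine Set.eq_univ_of_forall fun q => ?_
    induction q using Quotient.ind with | _ x =>
    by_cases hx : x ∈ T
    · exact ⟨c, Or.inr rfl, Quotient.sound (hT c hc x hx)⟩
    · exact ⟨x, Or.inl hx, rfl⟩
  calc Nat.card (Quotient r) + T.ncard
      = (Quotient.mk r '' (Tᶜ ∪ {c})).ncard + T.ncard := by rw [hcover, Set.ncard_univ]
    _ ≤ Tᶜ.ncard + 1 + T.ncard := by
      gcongr
      exact (Set.ncard_image_le).trans ((Set.ncard_union_le _ _).trans_eq (by simp))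
    _ = Nat.card α + 1 := by rw [← Set.ncard_add_ncard_compl T]; ring

end Setoid

/-- Let `A` and `B` be partitions (encoded as setoids, i.e. equivalence
relations, whose blocks are the equivalence classes) of a finite set `S` of cardinality `k`.
If some block of `A` (the class of a point `a`) and some block of `B` (the class of a point
`b`) intersect in a set of cardinality `l`, then `#(A) + #(B) ≤ k - l + 1 + #(A ⊔ B)`,
where `#(·)` is the number of blocks and `A ⊔ B` is the join in the lattice of partitions. -/
theorem card_blocks_add_card_blocks_le_of_inter_block
    (S : Type*) [Fintype S] (A B : Setoid S) (a b : S) (l : ℕ)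
    (hl : Nat.card ({x | A x a} ∩ {x | B x b} : Set S) = l) :
    Nat.card (Quotient A) + Nat.card (Quotient B) ≤
      Fintype.card S - l + 1 + Nat.card (Quotient (A ⊔ B)) := by
  have hblock : ∀ x ∈ {x | A x a} ∩ {x | B x b}, ∀ y ∈ {x | A x a} ∩ {x | B x b}, (A ⊓ B) x y :=
    fun x ⟨hxa, hxb⟩ y ⟨hya, hyb⟩ => ⟨A.trans' hxa (A.symm hya), B.trans' hxb (B.symm hyb)⟩
  have hmeet := (A ⊓ B).card_quotient_add_ncard_le hblock
  rw [← Nat.card_coe_set_eq, hl, Nat.card_eq_fintype_card (α := S)] at hmeet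
  have hsupermod := A.card_quotient_add_card_quotient_le B
  omega
end
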